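/- arXiv:2104.06526 — 2 statements merged into one kernel-verified Lean document; each statement's English description precedes it below -/
import Mathlib

section
/- Let I = (I_1,…,I_k,a) be a decorated nested chain. A point x = (x_1,…,x_n) ∈ Y^n lies in F_I if and only if all three of the following hold: (C1) Σ_{i∈I} |x_i| ≤ δ^n_{|I|} for every subset I ⊆ {1,…,n}; (C2) x_i ∈ ℝ_{≥0}·ζ^{−a(i)} for every i ∈ I_k; (C3) Σ_{i∈I_j} |x_i| = δ^n_{|I_j|} for every j ∈ {1,…,k}. -/
open Finset

noncomputable section

/-- `deltaP m k = m + (m-1) + ⋯ + (m-k+1)` (so `deltaP m 0 = 0`). -/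
def deltaP (m k : ℕ) : ℝ := ∑ i ∈ Finset.range k, ((m : ℝ) - (i : ℝ))

/-- `Y = ℝ≥0 · μ_r ⊆ ℂ`. -/
def Yset (r : ℕ) : Set ℂ :=
  {x | ∃ t : ℝ, 0 ≤ t ∧ ∃ ω : ℂ, ω ^ r = 1 ∧ x = (t : ℂ) * ω}

/-- The `r`-permutohedral complex `Δ^r_n ⊆ ℂ^n`. -/
def permComplex (r n : ℕ) : Set (Fin n → ℂ) :=
  {x | (∀ i, x i ∈ Yset r) ∧
    ∀ I : Finset (Fin n), ∑ i ∈ I, ‖x i‖ ≤ deltaP n I.card}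

/-- The hyperplane `H_{(I,a)}` of a decorated subset `(I, a)` (only the values of the
decoration `a` on `I` matter). -/
def hyper {r n : ℕ} (ζ : ℂ) (I : Finset (Fin n)) (a : Fin n → ZMod r) :
    Set (Fin n → ℂ) :=
  {x | ∑ i ∈ I, ζ ^ (a i).val * x i = (deltaP n I.card : ℂ)}
/-- A decorated nested chain `∅ ⊊ I_1 ⊊ ⋯ ⊊ I_k ⊆ [n]` (here `I j` for `j : Fin len`,
strictly increasing and all nonempty), with decoration `dec : I_k → ℤ/r` (the top set
`I_k` is `Finset.univ.sup I`). -/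
structure DecChain (r n : ℕ) where
  len : ℕ
  I : Fin len → Finset (Fin n)
  nonempty : ∀ j, (I j).Nonempty
  mono : ∀ j j' : Fin len, j < j' → I j ⊂ I j'
  dec : ∀ i : Fin n, i ∈ Finset.univ.sup I → ZMod r

/-- The top set `I_k` of a chain (`∅` when `k = 0`). -/
def DecChain.top {r n : ℕ} (c : DecChain r n) : Finset (Fin n) :=
  Finset.univ.sup c.I

theorem DecChain.mem_top {r n : ℕ} (c : DecChain r n) (j : Fin c.len) {i : Fin n}
    (h : i ∈ c.I j) : i ∈ c.top :=
  Finset.mem_of_subset (Finset.le_sup (Finset.mem_univ j)) h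

/-- The Δ-face `F_I = Δ^r_n ∩ H_{(I_1,a|_{I_1})} ∩ ⋯ ∩ H_{(I_k,a|_{I_k})}` of a
decorated nested chain. -/
def Fface {r n : ℕ} (ζ : ℂ) (c : DecChain r n) : Set (Fin n → ℂ) :=
  {x | x ∈ permComplex r n ∧ ∀ j : Fin c.len,
    ∑ i ∈ (c.I j).attach, ζ ^ (c.dec i.1 (c.mem_top j i.2)).val * x i.1
      = (deltaP n (c.I j).card : ℂ)}

lemma aux_re_eq_abs {z : ℂ} (h : z.re = ‖z‖) : z = (‖z‖ : ℂ) := by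
  have h2 : (‖z‖) ^ 2 = z.re ^ 2 + z.im ^ 2 := by
    rw [Complex.sq_norm, Complex.normSq_apply]; ring
  have him : z.im = 0 := by
    have h3 : z.im ^ 2 = 0 := by rw [← h] at h2; linarith
    exact pow_eq_zero_iff (by norm_num) |>.mp h3
  apply Complex.ext <;> simp [him, ← h]

/-- Remark 7.7: for `x ∈ Y^n`, membership `x ∈ F_I` is equivalent to
(C1) all the defining inequalities of `Δ^r_n`, (C2) `x_i ∈ ℝ≥0 · ζ^{-a(i)}` for all
`i ∈ I_k`, and (C3) `Σ_{i ∈ I_j} |x_i| = δ^n_{|I_j|}` for every `j`. -/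
theorem stmt5 (r n : ℕ) (hr : 2 ≤ r) (hn : 1 ≤ n) (ζ : ℂ) (hζ : IsPrimitiveRoot ζ r)
    (c : DecChain r n) (x : Fin n → ℂ) (hY : ∀ i, x i ∈ Yset r) :
    x ∈ Fface ζ c ↔
      ((∀ I : Finset (Fin n), ∑ i ∈ I, ‖x i‖ ≤ deltaP n I.card) ∧
       (∀ (i : Fin n) (h : i ∈ c.top), ∃ t : ℝ, 0 ≤ t ∧
          x i = (t : ℂ) * ζ ^ (-(((c.dec i h).val : ℤ)))) ∧
       (∀ j : Fin c.len, ∑ i ∈ c.I j, ‖x i‖ = deltaP n (c.I j).card)) := by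
  have hr0 : r ≠ 0 := by omega
  have hζ1 : ‖ζ‖ = 1 := by
    exact Complex.norm_eq_one_of_pow_eq_one hζ.pow_eq_one hr0
  have hζne : ζ ≠ 0 := by
    intro h; rw [h] at hζ1; simp at hζ1
  have habs : ∀ (k : ℕ) (w : ℂ), ‖ζ ^ k * w‖ = ‖w‖ := by
    intro k w; rw [norm_mul, norm_pow, hζ1, one_pow, one_mul]
  have hδnn : ∀ (I : Finset (Fin n)), 0 ≤ deltaP n I.card := by
    intro I
    apply Finset.sum_nonneg
    intro i hi
    have h1 : i < I.card := Finset.mem_range.mp hi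
    have h2 : I.card ≤ n := by simpa using Finset.card_le_card (Finset.subset_univ I)
    have h3 : (i : ℝ) < (n : ℝ) := by exact_mod_cast lt_of_lt_of_le h1 h2
    linarith
  -- the key pointwise fact in the backward direction
  have key : ∀ (i : Fin n) (h : i ∈ c.top) (t : ℝ), 0 ≤ t →
      x i = (t : ℂ) * ζ ^ (-(((c.dec i h).val : ℤ))) →
      ζ ^ (c.dec i h).val * x i = (‖x i‖ : ℂ) := by
    intro i h t ht hx
    have habsx : ‖x i‖ = t := by
      rw [hx, norm_mul, norm_zpow, hζ1, Complex.norm_real, Real.norm_of_nonneg ht]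
      simp
    rw [habsx, hx]
    rw [← zpow_natCast ζ ((c.dec i h).val)]
    rw [mul_comm ((t : ℂ)) _, ← mul_assoc, ← zpow_add₀ hζne]
    simp
  constructor
  · rintro ⟨⟨_, hineq⟩, heq⟩
    have hC3 : ∀ j : Fin c.len, ∑ i ∈ c.I j, ‖x i‖ = deltaP n (c.I j).card := by
      intro j
      have h1 : ‖∑ i ∈ (c.I j).attach,
          ζ ^ (c.dec i.1 (c.mem_top j i.2)).val * x i.1‖ = deltaP n (c.I j).card := by
        rw [heq j, Complex.norm_real, Real.norm_of_nonneg (hδnn _)]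
      have h2 : ‖∑ i ∈ (c.I j).attach,
          ζ ^ (c.dec i.1 (c.mem_top j i.2)).val * x i.1‖
          ≤ ∑ i ∈ c.I j, ‖x i‖ := by
        refine (norm_sum_le _ _).trans ?_
        rw [← Finset.sum_attach (c.I j) (fun i => ‖x i‖)]
        exact Finset.sum_le_sum fun i _ => le_of_eq (habs _ _)
      exact le_antisymm (hineq _) (h1 ▸ h2)
    refine ⟨hineq, ?_, hC3⟩
    intro i h
    -- len > 0
    rcases Nat.eq_zero_or_pos c.len with h0 | hpos
    · exfalso
      have : c.top = ∅ := by
        unfold DecChain.top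
        have : (Finset.univ : Finset (Fin c.len)) = ∅ := by
          rw [h0] at *; exact Finset.univ_eq_empty
        rw [this, Finset.sup_empty]
        rfl
      rw [this] at h; exact absurd h (Finset.notMem_empty i)
    · set jl : Fin c.len := ⟨c.len - 1, by omega⟩ with hjl
      have htop : c.top ⊆ c.I jl := by
        show c.top ≤ c.I jl
        apply Finset.sup_le
        intro j _
        rcases lt_or_eq_of_le (show j ≤ jl by
          apply Fin.le_def.mpr; simp [hjl]; omega) with hlt | heqj
        · exact (c.mono j jl hlt).subset
        · rw [heqj]
      have hij : i ∈ c.I jl := htop h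
      -- equality in triangle inequality at jl
      have hsum : ∑ i ∈ (c.I jl).attach,
          (ζ ^ (c.dec i.1 (c.mem_top jl i.2)).val * x i.1).re
          = ∑ i ∈ (c.I jl).attach,
          ‖ζ ^ (c.dec i.1 (c.mem_top jl i.2)).val * x i.1‖ := by
        have hre : (∑ i ∈ (c.I jl).attach,
            ζ ^ (c.dec i.1 (c.mem_top jl i.2)).val * x i.1).re
            = deltaP n (c.I jl).card := by
          rw [heq jl]; simp
        rw [← Complex.re_sum, hre]
        have : ∑ i ∈ (c.I jl).attach,
            ‖ζ ^ (c.dec i.1 (c.mem_top jl i.2)).val * x i.1‖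
            = ∑ i ∈ c.I jl, ‖x i‖ := by
          rw [← Finset.sum_attach (c.I jl) (fun i => ‖x i‖)]
          exact Finset.sum_congr rfl fun i _ => habs _ _
        rw [this, hC3 jl]
      have hpt := (Finset.sum_eq_sum_iff_of_le
        (fun i _ => Complex.re_le_norm _)).mp hsum
      have hi' := hpt ⟨i, hij⟩ (Finset.mem_attach _ _)
      have hz := aux_re_eq_abs hi'
      rw [habs] at hz
      have hz' : ζ ^ (c.dec i h).val * x i = (‖x i‖ : ℂ) := hz
      refine ⟨‖x i‖, norm_nonneg _, ?_⟩
      have hfin : (‖x i‖ : ℂ) * ζ ^ (-(((c.dec i h).val : ℤ))) = x i := by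
        rw [← hz', mul_comm (ζ ^ (c.dec i h).val) (x i), mul_assoc,
          ← zpow_natCast ζ ((c.dec i h).val), ← zpow_add₀ hζne]
        simp
      exact hfin.symm
  · rintro ⟨h1, h2, h3⟩
    refine ⟨⟨hY, h1⟩, ?_⟩
    intro j
    have : ∀ i ∈ (c.I j).attach,
        ζ ^ (c.dec i.1 (c.mem_top j i.2)).val * x i.1 = (‖x i.1‖ : ℂ) := by
      intro i _
      obtain ⟨t, ht, hx⟩ := h2 i.1 (c.mem_top j i.2)
      exact key i.1 (c.mem_top j i.2) t ht hx
    rw [Finset.sum_congr rfl this, Finset.sum_attach (c.I j)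
      (fun i => ((‖x i‖ : ℂ)))]
    rw [← Complex.ofReal_sum, h3 j]
end
end

section
/- For decorated nested chains I and J of subsets of {1,…,n}, F_I ⊆ F_J if and only if I refines J. -/
open Finset

noncomputable section

/-- The chain `c` refines the chain `d`: every set of `d` occurs among the sets of `c`,
and the decoration of `d` is the restriction of the decoration of `c`. -/
def Refines {r n : ℕ} (c d : DecChain r n) : Prop :=
  (∀ j' : Fin d.len, ∃ j : Fin c.len, c.I j = d.I j') ∧
  ∀ (i : Fin n) (hd : i ∈ d.top) (hc : i ∈ c.top), d.dec i hd = c.dec i hc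

/-! ### Auxiliary development -/

section Aux

variable {r n : ℕ}

lemma deltaP_closed (n k : ℕ) :
    deltaP n k = (k : ℝ) * n - (k : ℝ) * ((k : ℝ) - 1) / 2 := by
  induction k with
  | zero => simp [deltaP]
  | succ k ih =>
    rw [deltaP, Finset.sum_range_succ, ← deltaP, ih]
    push_cast
    ring

lemma deltaP_zero (n : ℕ) : deltaP n 0 = 0 := by simp [deltaP]

lemma deltaP_mono {a b n : ℕ} (hab : a ≤ b) (hbn : b ≤ n) :
    deltaP n a ≤ deltaP n b := by
  rw [deltaP_closed, deltaP_closed]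
  have h1 : (a : ℝ) ≤ b := by exact_mod_cast hab
  have h2 : (b : ℝ) ≤ n := by exact_mod_cast hbn
  have h0 : (0 : ℝ) ≤ a := by positivity
  nlinarith

lemma deltaP_strict {a b n : ℕ} (hab : a < b) (hbn : b ≤ n) :
    deltaP n a < deltaP n b := by
  rw [deltaP_closed, deltaP_closed]
  have h1 : (a : ℝ) + 1 ≤ b := by exact_mod_cast hab
  have h2 : (b : ℝ) ≤ n := by exact_mod_cast hbn
  have h0 : (0 : ℝ) ≤ a := by positivity
  nlinarith

/-- Cumulative chain sets: `csAux c 0 = ∅`, `csAux c (j+1) = c.I j` for `j < len`,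
and `csAux c j = c.top` for `j ≥ len`. -/
def csAux (c : DecChain r n) (j : ℕ) : Finset (Fin n) :=
  (Finset.range j).sup (fun i => if h : i < c.len then c.I ⟨i, h⟩ else c.top)

lemma csAux_zero (c : DecChain r n) : csAux c 0 = ∅ := by
  simp [csAux]

lemma csAux_mono (c : DecChain r n) : Monotone (csAux c) := by
  intro a b h
  exact Finset.sup_mono (Finset.range_subset_range.2 h)

lemma csAux_subset_top (c : DecChain r n) (j : ℕ) : csAux c j ⊆ c.top := by
  intro x hx
  rw [csAux, Finset.mem_sup] at hx
  obtain ⟨i, _, hxi⟩ := hx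
  by_cases h : i < c.len
  · rw [dif_pos h] at hxi
    exact c.mem_top ⟨i, h⟩ hxi
  · rw [dif_neg h] at hxi
    exact hxi

lemma DecChain.I_mono_le (c : DecChain r n) {j j' : Fin c.len} (h : j ≤ j') :
    c.I j ⊆ c.I j' := by
  rcases eq_or_lt_of_le h with rfl | h
  · exact subset_rfl
  · exact (c.mono _ _ h).subset

lemma csAux_succ (c : DecChain r n) {j : ℕ} (h : j < c.len) :
    csAux c (j + 1) = c.I ⟨j, h⟩ := by
  apply le_antisymm
  · apply Finset.sup_le
    intro i hi
    rw [Finset.mem_range] at hi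
    have hi' : i < c.len := lt_of_le_of_lt (Nat.lt_succ_iff.1 hi) h
    rw [dif_pos hi']
    exact c.I_mono_le (by exact Fin.mk_le_mk.2 (Nat.lt_succ_iff.1 hi))
  · have hmem : j ∈ Finset.range (j + 1) := by simp
    have hle := Finset.le_sup
      (f := fun i => if h : i < c.len then c.I ⟨i, h⟩ else c.top) hmem
    simpa [csAux, dif_pos h] using hle

lemma csAux_len (c : DecChain r n) : csAux c c.len = c.top := by
  apply le_antisymm (csAux_subset_top c _)
  apply Finset.sup_le
  intro j _
  have hj : j.val ∈ Finset.range c.len := by simp [j.isLt]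
  have hle := Finset.le_sup
    (f := fun i => if h : i < c.len then c.I ⟨i, h⟩ else c.top) hj
  simpa [csAux, dif_pos j.isLt] using hle

lemma csAux_ge_len (c : DecChain r n) {j : ℕ} (h : c.len ≤ j) : csAux c j = c.top :=
  le_antisymm (csAux_subset_top c j) (csAux_len c ▸ csAux_mono c h)

lemma csAux_ssubset_succ (c : DecChain r n) {j : ℕ} (h : j < c.len) :
    csAux c j ⊂ csAux c (j + 1) := by
  rw [csAux_succ c h]
  cases j with
  | zero =>
    rw [csAux_zero]
    exact Finset.empty_ssubset.2 (c.nonempty _)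
  | succ j =>
    rw [csAux_succ c (lt_trans (Nat.lt_succ_self j) h)]
    exact c.mono _ _ (by exact Fin.mk_lt_mk.2 (Nat.lt_succ_self j))

lemma csAux_card_lt (c : DecChain r n) {j j' : ℕ} (h : j < j') (h' : j' ≤ c.len) :
    (csAux c j).card < (csAux c j').card :=
  Finset.card_lt_card
    (Finset.ssubset_of_ssubset_of_subset (csAux_ssubset_succ c (lt_of_lt_of_le h h'))
      (csAux_mono c (Nat.succ_le_of_lt h)))

lemma card_le_n (I : Finset (Fin n)) : I.card ≤ n := by
  simpa using Finset.card_le_card (Finset.subset_univ I)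

/-- The level of `i`: the least `j` with `i ∈ csAux c j`. -/
def levAux (c : DecChain r n) (i : Fin n) : ℕ := sInf {j | i ∈ csAux c j}

lemma levAux_mem_aux (c : DecChain r n) {i : Fin n} (h : i ∈ c.top) :
    c.len ∈ {j | i ∈ csAux c j} := by
  rw [Set.mem_setOf_eq, csAux_len]
  exact h

lemma levAux_spec (c : DecChain r n) {i : Fin n} (h : i ∈ c.top) :
    i ∈ csAux c (levAux c i) :=
  Nat.sInf_mem ⟨c.len, levAux_mem_aux c h⟩

lemma levAux_le_len (c : DecChain r n) {i : Fin n} (h : i ∈ c.top) :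
    levAux c i ≤ c.len :=
  Nat.sInf_le (levAux_mem_aux c h)

lemma levAux_pos (c : DecChain r n) {i : Fin n} (h : i ∈ c.top) :
    1 ≤ levAux c i := by
  rw [Nat.one_le_iff_ne_zero]
  intro h0
  have := levAux_spec c h
  rw [h0, csAux_zero] at this
  exact absurd this (Finset.notMem_empty i)

lemma levAux_eq (c : DecChain r n) {i : Fin n} {j : ℕ}
    (h1 : i ∈ csAux c (j + 1)) (h2 : i ∉ csAux c j) : levAux c i = j + 1 := by
  apply le_antisymm (Nat.sInf_le h1)
  by_contra h'
  push_neg at h'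
  have hle : levAux c i ≤ j := Nat.lt_succ_iff.1 h'
  have htop : i ∈ c.top := csAux_subset_top c (j + 1) h1
  exact h2 (Finset.mem_of_subset (csAux_mono c hle) (levAux_spec c htop))

/-- Block value. -/
def bvAux (c : DecChain r n) (j : ℕ) : ℝ :=
  (deltaP n (csAux c (j + 1)).card - deltaP n (csAux c j).card) /
    (((csAux c (j + 1)).card : ℝ) - ((csAux c j).card : ℝ))

/-- The coordinate sizes of the distinguished point of the face of `c`. -/
def tAux (c : DecChain r n) (i : Fin n) : ℝ :=
  if i ∈ c.top then bvAux c (levAux c i - 1) else 0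

lemma bvAux_pos (c : DecChain r n) {j : ℕ} (h : j < c.len) : 0 < bvAux c j := by
  have hlt := csAux_card_lt c (Nat.lt_succ_self j) (Nat.succ_le_of_lt h)
  have hn' := card_le_n (csAux c (j + 1))
  rw [bvAux, deltaP_closed, deltaP_closed]
  set a := (csAux c j).card
  set b := (csAux c (j + 1)).card
  have h1 : (a : ℝ) + 1 ≤ b := by exact_mod_cast hlt
  have h2 : (b : ℝ) ≤ n := by exact_mod_cast hn'
  have h0 : (0 : ℝ) ≤ a := by positivity
  apply div_pos
  · nlinarith
  · linarith

lemma tAux_pos (c : DecChain r n) {i : Fin n} (h : i ∈ c.top) : 0 < tAux c i := by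
  rw [tAux, if_pos h]
  have h1 := levAux_pos c h
  have h2 := levAux_le_len c h
  exact bvAux_pos c (by omega)

lemma tAux_nonneg (c : DecChain r n) (i : Fin n) : 0 ≤ tAux c i := by
  by_cases h : i ∈ c.top
  · exact le_of_lt (tAux_pos c h)
  · rw [tAux, if_neg h]

lemma tAux_eq_zero (c : DecChain r n) {i : Fin n} (h : i ∉ c.top) : tAux c i = 0 :=
  if_neg h

lemma tAux_block (c : DecChain r n) {j : ℕ} (hj : j < c.len) {i : Fin n}
    (h1 : i ∈ csAux c (j + 1)) (h2 : i ∉ csAux c j) : tAux c i = bvAux c j := by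
  have htop := csAux_subset_top c (j + 1) h1
  rw [tAux, if_pos htop, levAux_eq c h1 h2, Nat.add_sub_cancel]

lemma sum_block (c : DecChain r n) {j : ℕ} (hj : j < c.len) :
    ∑ i ∈ csAux c (j + 1) \ csAux c j, tAux c i
      = deltaP n (csAux c (j + 1)).card - deltaP n (csAux c j).card := by
  have hsub : csAux c j ⊆ csAux c (j + 1) := csAux_mono c (Nat.le_succ j)
  have hlt := csAux_card_lt c (Nat.lt_succ_self j) (Nat.succ_le_of_lt hj)
  have h1 : ∑ i ∈ csAux c (j + 1) \ csAux c j, tAux c i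
      = ∑ _i ∈ csAux c (j + 1) \ csAux c j, bvAux c j := by
    apply Finset.sum_congr rfl
    intro i hi
    rw [Finset.mem_sdiff] at hi
    exact tAux_block c hj hi.1 hi.2
  rw [h1, Finset.sum_const, Finset.card_sdiff_of_subset hsub, nsmul_eq_mul, bvAux,
    Nat.cast_sub hlt.le]
  have hx : ((csAux c (j + 1)).card : ℝ) - ((csAux c j).card : ℝ) ≠ 0 := by
    have : ((csAux c j).card : ℝ) < ((csAux c (j + 1)).card : ℝ) := by
      exact_mod_cast hlt
    linarith
  field_simp

lemma sum_csAux (c : DecChain r n) :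
    ∀ j, j ≤ c.len → ∑ i ∈ csAux c j, tAux c i = deltaP n (csAux c j).card := by
  intro j
  induction j with
  | zero => intro _; simp [csAux_zero, deltaP_zero]
  | succ j ih =>
    intro hj
    have hj' : j < c.len := hj
    have hsub : csAux c j ⊆ csAux c (j + 1) := csAux_mono c (Nat.le_succ j)
    rw [← Finset.sum_sdiff hsub, sum_block c hj', ih (le_of_lt hj')]
    ring

lemma key_ineq (c : DecChain r n) {j : ℕ} (hj : j < c.len) {a p : ℕ}
    (ha : a ≤ (csAux c j).card)
    (hp : p ≤ (csAux c (j + 1)).card - (csAux c j).card) :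
    (p : ℝ) * bvAux c j ≤ deltaP n (a + p) - deltaP n a ∧
    ((p : ℝ) * bvAux c j = deltaP n (a + p) - deltaP n a →
      p = 0 ∨ (p = (csAux c (j + 1)).card - (csAux c j).card ∧
        a = (csAux c j).card)) := by
  have hlt := csAux_card_lt c (Nat.lt_succ_self j) (Nat.succ_le_of_lt hj)
  have hn' := card_le_n (csAux c (j + 1))
  set b := (csAux c j).card with hbdef
  set b' := (csAux c (j + 1)).card with hb'def
  set q := b' - b with hqdef
  have hbq : b + q = b' := by omega
  have hq1 : 1 ≤ q := by omega
  have hA : (a : ℝ) ≤ b := by exact_mod_cast ha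
  have hP : (p : ℝ) ≤ q := by exact_mod_cast hp
  have hQ : (1 : ℝ) ≤ q := by exact_mod_cast hq1
  have hBQ : (b : ℝ) + q = b' := by exact_mod_cast hbq
  have hN : (b' : ℝ) ≤ n := by exact_mod_cast hn'
  have h0p : (0 : ℝ) ≤ p := by positivity
  have h0a : (0 : ℝ) ≤ a := by positivity
  have hbv : bvAux c j = (n : ℝ) - b - ((q : ℝ) - 1) / 2 := by
    rw [bvAux, deltaP_closed, deltaP_closed, ← hbdef, ← hb'def, ← hBQ]
    have hq0 : (q : ℝ) ≠ 0 := by linarith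
    rw [show ((b : ℝ) + q - b) = q by ring, div_eq_iff hq0]
    ring
  constructor
  · rw [hbv, deltaP_closed, deltaP_closed]
    push_cast
    nlinarith [mul_nonneg h0p (sub_nonneg.2 hA), mul_nonneg h0p (sub_nonneg.2 hP)]
  · intro heq
    rw [hbv, deltaP_closed, deltaP_closed] at heq
    push_cast at heq
    by_cases hp0 : p = 0
    · exact Or.inl hp0
    · right
      have hp1 : (1 : ℝ) ≤ p := by
        exact_mod_cast Nat.one_le_iff_ne_zero.2 hp0
      have key2 : (p : ℝ) * ((b : ℝ) - a) + (p : ℝ) * ((q : ℝ) - p) / 2 = 0 := by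
        linear_combination -heq
      have t1 : (0 : ℝ) ≤ (p : ℝ) * ((b : ℝ) - a) :=
        mul_nonneg h0p (sub_nonneg.2 hA)
      have t2 : (0 : ℝ) ≤ (p : ℝ) * ((q : ℝ) - p) :=
        mul_nonneg h0p (sub_nonneg.2 hP)
      have e1 : (p : ℝ) * ((b : ℝ) - a) = 0 := by linarith
      have e2 : (p : ℝ) * ((q : ℝ) - p) = 0 := by linarith
      have hpne : (p : ℝ) ≠ 0 := by linarith
      have hba : (b : ℝ) - a = 0 := by
        rcases mul_eq_zero.1 e1 with h | h
        · exact absurd h hpne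
        · exact h
      have hqp : (q : ℝ) - p = 0 := by
        rcases mul_eq_zero.1 e2 with h | h
        · exact absurd h hpne
        · exact h
      constructor
      · have : (p : ℝ) = q := by linarith
        exact_mod_cast this
      · have : (a : ℝ) = b := by linarith
        exact_mod_cast this

lemma main_ineq (c : DecChain r n) :
    ∀ j, j ≤ c.len → ∀ I : Finset (Fin n), I ⊆ csAux c j →
      ∑ i ∈ I, tAux c i ≤ deltaP n I.card ∧
        (∑ i ∈ I, tAux c i = deltaP n I.card → ∃ j' ≤ j, I = csAux c j') := by
  intro j
  induction j with
  | zero =>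
    intro _ I hI
    have hIe : I = ∅ := Finset.subset_empty.1 (by rwa [csAux_zero] at hI)
    subst hIe
    refine ⟨by simp [deltaP_zero], fun _ => ⟨0, le_refl 0, (csAux_zero c).symm⟩⟩
  | succ j ih =>
    intro hj I hI
    have hj' : j < c.len := hj
    have hsub : csAux c j ⊆ csAux c (j + 1) := csAux_mono c (Nat.le_succ j)
    set I' := I ∩ csAux c j with hI'def
    set B := I \ csAux c j with hBdef
    have hIsplit : ∑ i ∈ B, tAux c i + ∑ i ∈ I', tAux c i = ∑ i ∈ I, tAux c i := by
      rw [hBdef, hI'def, ← Finset.sdiff_inter_self_left I (csAux c j)]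
      exact Finset.sum_sdiff Finset.inter_subset_left
    have hBsub : B ⊆ csAux c (j + 1) \ csAux c j := by
      intro i hi
      rw [hBdef, Finset.mem_sdiff] at hi
      rw [Finset.mem_sdiff]
      exact ⟨hI hi.1, hi.2⟩
    have hBsum : ∑ i ∈ B, tAux c i = (B.card : ℝ) * bvAux c j := by
      have h1 : ∑ i ∈ B, tAux c i = ∑ _i ∈ B, bvAux c j := by
        apply Finset.sum_congr rfl
        intro i hi
        have hmem := hBsub hi
        rw [Finset.mem_sdiff] at hmem
        exact tAux_block c hj' hmem.1 hmem.2
      rw [h1, Finset.sum_const, nsmul_eq_mul]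
    have ha : I'.card ≤ (csAux c j).card :=
      Finset.card_le_card Finset.inter_subset_right
    have hp : B.card ≤ (csAux c (j + 1)).card - (csAux c j).card := by
      have h1 := Finset.card_le_card hBsub
      rwa [Finset.card_sdiff_of_subset hsub] at h1
    have hcard : I'.card + B.card = I.card :=
      Finset.card_inter_add_card_sdiff I (csAux c j)
    obtain ⟨hk1, hk2⟩ := key_ineq c hj' ha hp
    obtain ⟨ih1, ih2⟩ := ih (le_of_lt hj') I' Finset.inter_subset_right
    have hδ : deltaP n I.card = deltaP n (I'.card + B.card) := by rw [hcard]
    constructor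
    · rw [hδ]; linarith
    · intro heq
      rw [hδ] at heq
      have e1 : ∑ i ∈ I', tAux c i = deltaP n I'.card := by linarith
      have e2 : (B.card : ℝ) * bvAux c j
          = deltaP n (I'.card + B.card) - deltaP n I'.card := by linarith
      obtain ⟨j'', hj'', hIeq⟩ := ih2 e1
      rcases hk2 e2 with hp0 | ⟨hpq, hab⟩
      · have hBe : B = ∅ := Finset.card_eq_zero.1 hp0
        have hIsub : I ⊆ csAux c j := by
          rw [← Finset.sdiff_eq_empty_iff_subset]; exact hBe
        have hII' : I = I' := by rw [hI'def, Finset.inter_eq_left.2 hIsub]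
        exact ⟨j'', le_trans hj'' (Nat.le_succ j), by rw [hII', hIeq]⟩
      · have hI'eq : I' = csAux c j :=
          Finset.eq_of_subset_of_card_le Finset.inter_subset_right
            (le_of_eq (by rw [hab]))
        have hBeq : B = csAux c (j + 1) \ csAux c j :=
          Finset.eq_of_subset_of_card_le hBsub
            (le_of_eq (by rw [Finset.card_sdiff_of_subset hsub, hpq]))
        refine ⟨j + 1, le_refl _, ?_⟩
        have hIu : I = B ∪ I' := by
          rw [hBdef, hI'def, Finset.sdiff_union_inter]
        rw [hIu, hI'eq, hBeq, Finset.union_comm, Finset.union_sdiff_of_subset hsub]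

lemma tsum_split (c : DecChain r n) (I : Finset (Fin n)) :
    ∑ i ∈ I ∩ c.top, tAux c i = ∑ i ∈ I, tAux c i := by
  apply Finset.sum_subset Finset.inter_subset_left
  intro i hi hni
  apply tAux_eq_zero
  intro hmem
  exact hni (Finset.mem_inter.2 ⟨hi, hmem⟩)

lemma tsum_le (c : DecChain r n) (I : Finset (Fin n)) :
    ∑ i ∈ I, tAux c i ≤ deltaP n I.card := by
  have h1 := (main_ineq c c.len (le_refl _) (I ∩ c.top)
    (by rw [csAux_len]; exact Finset.inter_subset_right)).1
  have h2 : deltaP n (I ∩ c.top).card ≤ deltaP n I.card :=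
    deltaP_mono (Finset.card_le_card Finset.inter_subset_left) (card_le_n I)
  have h3 := tsum_split c I
  linarith

lemma tsum_eq_top (c : DecChain r n) {I : Finset (Fin n)}
    (heq : ∑ i ∈ I, tAux c i = deltaP n I.card) (hne : I.Nonempty) :
    ∃ j : Fin c.len, I = c.I j := by
  have hmain := main_ineq c c.len (le_refl _) (I ∩ c.top)
    (by rw [csAux_len]; exact Finset.inter_subset_right)
  have h3 := tsum_split c I
  have hsubtop : I ⊆ c.top := by
    by_contra hsub
    have hne' : I ∩ c.top ≠ I := by
      intro h
      exact hsub (Finset.inter_eq_left.1 h)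
    have hss : I ∩ c.top ⊂ I := lt_of_le_of_ne Finset.inter_subset_left hne'
    have hcard : (I ∩ c.top).card < I.card := Finset.card_lt_card hss
    have h4 := deltaP_strict hcard (card_le_n I)
    linarith [hmain.1]
  have hIinter : I ∩ c.top = I := Finset.inter_eq_left.2 hsubtop
  rw [hIinter] at hmain
  obtain ⟨j', hj', hIeq⟩ := hmain.2 heq
  have hj0 : j' ≠ 0 := by
    intro h0
    rw [h0, csAux_zero] at hIeq
    exact Finset.not_nonempty_empty (hIeq ▸ hne)
  obtain ⟨j'', rfl⟩ : ∃ j'', j' = j'' + 1 := ⟨j' - 1, by omega⟩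
  have hjlt : j'' < c.len := by omega
  exact ⟨⟨j'', hjlt⟩, by rw [hIeq, csAux_succ c hjlt]⟩

/-! ### The distinguished point of a face -/

/-- The distinguished point of the face of `c`. -/
def ptAux (ζ : ℂ) (c : DecChain r n) : Fin n → ℂ := fun i =>
  if h : i ∈ c.top then ((tAux c i : ℝ) : ℂ) * ζ ^ (r - (c.dec i h).val) else 0

variable {ζ : ℂ}

lemma abs_pow_root (hζ : IsPrimitiveRoot ζ r) (hr : 2 ≤ r) (m : ℕ) :
    ‖ζ ^ m‖ = 1 := by
  have h1 : ‖ζ‖ = 1 := by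
    exact Complex.norm_eq_one_of_pow_eq_one hζ.pow_eq_one (by omega)
  rw [norm_pow, h1, one_pow]

lemma abs_ptAux (hζ : IsPrimitiveRoot ζ r) (hr : 2 ≤ r) (c : DecChain r n)
    (i : Fin n) : ‖ptAux ζ c i‖ = tAux c i := by
  rw [ptAux]
  split
  · next h =>
    rw [norm_mul, abs_pow_root hζ hr, mul_one, Complex.norm_real, Real.norm_eq_abs,
      abs_of_nonneg (tAux_nonneg c i)]
  · next h =>
    rw [norm_zero, tAux_eq_zero c h]

lemma ptAux_cancel (hζ : IsPrimitiveRoot ζ r) (hr : 2 ≤ r) (c : DecChain r n)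
    {i : Fin n} (h : i ∈ c.top) :
    ζ ^ (c.dec i h).val * ptAux ζ c i = ((tAux c i : ℝ) : ℂ) := by
  haveI : NeZero r := ⟨by omega⟩
  rw [ptAux, dif_pos h]
  have hval : (c.dec i h).val ≤ r := le_of_lt (ZMod.val_lt _)
  calc ζ ^ (c.dec i h).val * (((tAux c i : ℝ) : ℂ) * ζ ^ (r - (c.dec i h).val))
      = ((tAux c i : ℝ) : ℂ) * ζ ^ ((c.dec i h).val + (r - (c.dec i h).val)) := by
        rw [pow_add]; ring
    _ = ((tAux c i : ℝ) : ℂ) := by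
        rw [Nat.add_sub_cancel' hval, hζ.pow_eq_one, mul_one]

lemma ptAux_mem_perm (hζ : IsPrimitiveRoot ζ r) (hr : 2 ≤ r) (c : DecChain r n) :
    ptAux ζ c ∈ permComplex r n := by
  constructor
  · intro i
    rw [ptAux]
    split
    · next h =>
      exact ⟨tAux c i, tAux_nonneg c i, ζ ^ (r - (c.dec i h).val),
        by rw [← pow_mul, mul_comm, pow_mul, hζ.pow_eq_one, one_pow], rfl⟩
    · exact ⟨0, le_refl 0, 1, one_pow r, by simp⟩
  · intro I
    have h1 : ∑ i ∈ I, ‖ptAux ζ c i‖ = ∑ i ∈ I, tAux c i :=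
      Finset.sum_congr rfl (fun i _ => abs_ptAux hζ hr c i)
    rw [h1]
    exact tsum_le c I

lemma ptAux_mem_Fface (hζ : IsPrimitiveRoot ζ r) (hr : 2 ≤ r) (c : DecChain r n) :
    ptAux ζ c ∈ Fface ζ c := by
  refine ⟨ptAux_mem_perm hζ hr c, ?_⟩
  intro j
  have hstep : ∀ i : {x // x ∈ c.I j}, i ∈ (c.I j).attach →
      ζ ^ (c.dec i.1 (c.mem_top j i.2)).val * ptAux ζ c i.1
        = ((tAux c i.1 : ℝ) : ℂ) := fun i _ =>
    ptAux_cancel hζ hr c (c.mem_top j i.2)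
  have hstep' : ∑ i ∈ (c.I j).attach,
      ζ ^ (c.dec i.1 (c.mem_top j i.2)).val * ptAux ζ c i.1
        = ∑ i ∈ (c.I j).attach, ((tAux c i.1 : ℝ) : ℂ) :=
    Finset.sum_congr rfl hstep
  rw [hstep', Finset.sum_attach (c.I j) (fun i => ((tAux c i : ℝ) : ℂ))]
  have hcs : csAux c (j.val + 1) = c.I j := by
    rw [csAux_succ c j.isLt]
  have hsum := sum_csAux c (j.val + 1) (Nat.succ_le_of_lt j.isLt)
  rw [hcs] at hsum
  rw [← hsum]
  push_cast
  rfl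

lemma eq_of_sum_re {ι : Type*} (s : Finset ι) (z : ι → ℂ) (t : ι → ℝ) (D : ℝ)
    (habs : ∀ i ∈ s, ‖z i‖ = t i)
    (hsum : ∑ i ∈ s, z i = (D : ℂ)) (hle : ∑ i ∈ s, t i ≤ D) :
    ∀ i ∈ s, z i = ((t i : ℝ) : ℂ) := by
  have hre : ∑ i ∈ s, (z i).re = D := by
    have h1 := congrArg Complex.re hsum
    rwa [Complex.re_sum, Complex.ofReal_re] at h1
  have hterm : ∀ i ∈ s, (z i).re ≤ t i := fun i hi =>
    (habs i hi) ▸ Complex.re_le_norm (z i)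
  have hnn : ∀ i ∈ s, 0 ≤ t i - (z i).re := fun i hi =>
    sub_nonneg.2 (hterm i hi)
  have hsum0 : ∑ i ∈ s, (t i - (z i).re) = 0 := by
    rw [Finset.sum_sub_distrib, hre]
    have := Finset.sum_nonneg hnn
    rw [Finset.sum_sub_distrib, hre] at this
    linarith
  have hall := (Finset.sum_eq_zero_iff_of_nonneg hnn).1 hsum0
  intro i hi
  have h1 : (z i).re = t i := by
    have := hall i hi
    linarith
  have habs' := habs i hi
  have h2 : (z i).im = 0 := by
    have hsq := Complex.sq_norm (z i)
    rw [habs', Complex.normSq_apply, ← h1] at hsq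
    nlinarith [hsq]
  apply Complex.ext
  · rw [Complex.ofReal_re, h1]
  · rw [Complex.ofReal_im, h2]

lemma dec_eq_of (hζ : IsPrimitiveRoot ζ r) (hr : 2 ≤ r) (a b : ZMod r) {t : ℝ}
    (ht : 0 < t) (h : ζ ^ b.val * (((t : ℝ) : ℂ) * ζ ^ (r - a.val)) = ((t : ℝ) : ℂ)) :
    b = a := by
  haveI : NeZero r := ⟨by omega⟩
  have hav : a.val ≤ r := le_of_lt (ZMod.val_lt a)
  have h1 : ((t : ℝ) : ℂ) * ζ ^ (b.val + (r - a.val)) = ((t : ℝ) : ℂ) * 1 := by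
    rw [pow_add, mul_one]
    linear_combination h
  have ht' : ((t : ℝ) : ℂ) ≠ 0 := by
    simp only [ne_eq, Complex.ofReal_eq_zero]
    linarith
  have h2 : ζ ^ (b.val + (r - a.val)) = 1 := mul_left_cancel₀ ht' h1
  have h3 : r ∣ b.val + (r - a.val) := (hζ.pow_eq_one_iff_dvd _).1 h2
  have h4 : ((b.val + (r - a.val) : ℕ) : ZMod r) = 0 :=
    (ZMod.natCast_eq_zero_iff _ _).2 h3
  rw [Nat.cast_add, Nat.cast_sub hav, ZMod.natCast_zmod_val, ZMod.natCast_zmod_val,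
    ZMod.natCast_self, zero_sub, ← sub_eq_add_neg, sub_eq_zero] at h4
  exact h4

end Aux

/-- Proposition 7.19(ii): `F_I ⊆ F_J` iff `I` refines `J`. -/
theorem stmt8 (r n : ℕ) (hr : 2 ≤ r) (hn : 1 ≤ n) (ζ : ℂ) (hζ : IsPrimitiveRoot ζ r)
    (c d : DecChain r n) :
    Fface ζ c ⊆ Fface ζ d ↔ Refines c d := by
  constructor
  · -- forward: F_c ⊆ F_d → c refines d
    intro hsub
    have hpt := ptAux_mem_Fface hζ hr c
    have hptd := hsub hpt
    -- the auxiliary function z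
    set z : Fin n → ℂ := fun i =>
      if h : i ∈ d.top then ζ ^ (d.dec i h).val * ptAux ζ c i else 0 with hzdef
    have hkey : ∀ j' : Fin d.len,
        (∀ i ∈ d.I j', z i = ((tAux c i : ℝ) : ℂ)) ∧
        ∑ i ∈ d.I j', tAux c i = deltaP n (d.I j').card := by
      intro j'
      have hhyp := hptd.2 j'
      have he : ∑ i ∈ (d.I j').attach,
          ζ ^ (d.dec i.1 (d.mem_top j' i.2)).val * ptAux ζ c i.1
            = ∑ i ∈ d.I j', z i := by
        rw [← Finset.sum_attach (d.I j') z]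
        apply Finset.sum_congr rfl
        intro i _
        simp only [hzdef]
        rw [dif_pos (d.mem_top j' i.2)]
      rw [he] at hhyp
      have habs : ∀ i ∈ d.I j', ‖z i‖ = tAux c i := by
        intro i hi
        simp only [hzdef]
        rw [dif_pos (d.mem_top j' hi), norm_mul, abs_pow_root hζ hr,
          one_mul, abs_ptAux hζ hr c i]
      have hze := eq_of_sum_re (d.I j') z (tAux c) (deltaP n (d.I j').card)
        habs hhyp (tsum_le c (d.I j'))
      refine ⟨hze, ?_⟩
      have hs : ∑ i ∈ d.I j', z i = ((∑ i ∈ d.I j', tAux c i : ℝ) : ℂ) := by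
        have h1 : ∑ i ∈ d.I j', z i = ∑ i ∈ d.I j', ((tAux c i : ℝ) : ℂ) :=
          Finset.sum_congr rfl hze
        rw [h1]
        push_cast
        rfl
      rw [hs] at hhyp
      exact_mod_cast hhyp
    constructor
    · intro j'
      obtain ⟨jj, hjj⟩ := tsum_eq_top c (hkey j').2 (d.nonempty j')
      exact ⟨jj, hjj.symm⟩
    · intro i hd hc
      have hmem : i ∈ Finset.univ.sup d.I := hd
      rw [Finset.mem_sup] at hmem
      obtain ⟨j', _, hij'⟩ := hmem
      have hz := (hkey j').1 i hij'
      simp only [hzdef] at hz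
      rw [dif_pos hd] at hz
      rw [ptAux, dif_pos hc] at hz
      exact dec_eq_of hζ hr (c.dec i hc) (d.dec i hd) (tAux_pos c hc) hz
  · -- backward: refines → F_c ⊆ F_d
    intro href x hx
    refine ⟨hx.1, ?_⟩
    intro j'
    obtain ⟨j, hjj⟩ := href.1 j'
    set g : Fin n → ℂ := fun i =>
      if h : i ∈ c.top then ζ ^ (c.dec i h).val * x i else 0 with hgdef
    have hc' : ∑ i ∈ (c.I j).attach, ζ ^ (c.dec i.1 (c.mem_top j i.2)).val * x i.1
        = ∑ i ∈ c.I j, g i := by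
      rw [← Finset.sum_attach (c.I j) g]
      apply Finset.sum_congr rfl
      intro i _
      simp only [hgdef]
      rw [dif_pos (c.mem_top j i.2)]
    have hd' : ∑ i ∈ (d.I j').attach, ζ ^ (d.dec i.1 (d.mem_top j' i.2)).val * x i.1
        = ∑ i ∈ d.I j', g i := by
      rw [← Finset.sum_attach (d.I j') g]
      apply Finset.sum_congr rfl
      intro i _
      have hic : i.1 ∈ c.I j := by rw [hjj]; exact i.2
      have hct : i.1 ∈ c.top := c.mem_top j hic
      simp only [hgdef]
      rw [dif_pos hct, href.2 i.1 (d.mem_top j' i.2) hct]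
    rw [hd', ← hjj, ← hc', hx.2 j, hjj]

end
end
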